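/- Expectation of the ordered-pair double sum over a CorgiPile shuffle (the key identity used to bound I₁₁). Let N ≥ 2 and let (u_{i,j})_{i≠j} be any family of vectors in ℝ^d indexed by ordered pairs of distinct indices i, j ∈ {1,…,m} (in the paper, u_{i,j} = H_i(x*)·∇f_j(x_0^s), the Hessian of f_i at x* applied to the gradient of f_j at x_0^s). Then E_ψ[Σ_{k=1}^{nb} Σ_{k'=1}^{k−1} u_{ψ(k),ψ(k')}] = (n/(2N))·Σ_{l=1}^N Σ_{i≠j, i,j∈B_l} u_{i,j} + (n(n−1)/(2N(N−1)))·Σ_{l≠l'} Σ_{i∈B_l, j∈B_{l'}} u_{i,j}, where the expectation is over a CorgiPile shuffle ψ. -/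

import Mathlib

/-!
A shuffle is a set `S` of `n` blocks together with an enumeration of the `n * b` indices of
those blocks. For fixed `S`, precomposing the enumeration with the reversal of the positions
exchanges `k' < k` with `k < k'`, so every ordered pair `(i, j)` of distinct indices of `S`
has `i` after `j` in exactly half of the `(n * b)!` enumerations. Summing over `S`, the pair
`(i, j)` is counted once for every `n`-set of blocks containing `blk i` and `blk j`; there are
`C(N, n) · n^(s) / N^(s)` of them (falling factorials), where `s ∈ {1, 2}` is the number of
distinct blocks among `blk i`, `blk j`.
-/

open Finset

noncomputable section

/-- Euclidean space `ℝ^d`. -/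
abbrev Eu (d : ℕ) : Type := EuclideanSpace ℝ (Fin d)

/-- A CorgiPile shuffle: a set of `n` blocks (out of `N`) together with an injection
from the `n*b` positions onto the set of indices belonging to the chosen blocks. -/
def CorgiShuffle (N n b : ℕ) (blk : Fin (N * b) → Fin N) : Type :=
  { p : Finset (Fin N) × (Fin (n * b) → Fin (N * b)) //
      p.1.card = n ∧ Function.Injective p.2 ∧
      (∀ k, blk (p.2 k) ∈ p.1) ∧
      (∀ i, blk i ∈ p.1 → ∃ k, p.2 k = i) }

noncomputable instance (N n b : ℕ) (blk : Fin (N * b) → Fin N) :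
    Fintype (CorgiShuffle N n b blk) := by
  unfold CorgiShuffle; exact Fintype.ofFinite _

/-- The `l`-th block, as a finset of indices. -/
def blockSet {N b : ℕ} (blk : Fin (N * b) → Fin N) (l : Fin N) : Finset (Fin (N * b)) :=
  Finset.univ.filter (fun i => blk i = l)

open scoped Nat

section OrderedPairs

variable {M : Type*} [AddCommMonoid M]

theorem sum_sum_ite_lt_add_sum_sum_ite_gt {α : Type*} [Fintype α] [LinearOrder α]
    (f : α → α → M) :
    (∑ k, ∑ k', if k' < k then f k k' else 0) + (∑ k, ∑ k', if k < k' then f k k' else 0)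
      = ∑ k, ∑ k', if k = k' then 0 else f k k' := by
  simp only [← sum_add_distrib]
  refine sum_congr rfl fun k _ => sum_congr rfl fun k' _ => ?_
  rcases lt_trichotomy k k' with h | rfl | h
  · simp [h, h.ne, h.not_gt]
  · simp
  · simp [h, h.ne', h.not_gt]

theorem sum_sum_ite_eq_comp_equiv {α γ : Type*} [Fintype α] [Fintype γ] [DecidableEq α]
    [DecidableEq γ] (e : α ≃ γ) (v : γ → γ → M) :
    ∑ k, ∑ k', (if k = k' then 0 else v (e k) (e k'))
      = ∑ i, ∑ j, if i = j then 0 else v i j := by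
  simp only [← e.injective.eq_iff]
  exact Fintype.sum_equiv e _ _ fun k => Fintype.sum_equiv e _ _ fun _ => rfl

theorem sum_equiv_sum_sum_ite_lt_eq_gt {γ : Type*} {m : ℕ} [Fintype γ] [DecidableEq γ]
    (v : γ → γ → M) :
    ∑ e : Fin m ≃ γ, ∑ k, ∑ k', (if k' < k then v (e k) (e k') else 0)
      = ∑ e : Fin m ≃ γ, ∑ k, ∑ k', (if k < k' then v (e k) (e k') else 0) := by
  refine Fintype.sum_equiv (Equiv.equivCongr Fin.revPerm (Equiv.refl γ)) _ _ fun e => ?_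
  refine Fintype.sum_equiv Fin.revPerm _ _ fun k => Fintype.sum_equiv Fin.revPerm _ _ fun k' => ?_
  simp [Fin.revPerm_symm, Fin.rev_lt_rev]

theorem two_nsmul_sum_equiv_sum_sum_ite_lt {γ : Type*} {m : ℕ} [Fintype γ] [DecidableEq γ]
    (hγ : Fintype.card γ = m) (v : γ → γ → M) :
    2 • ∑ e : Fin m ≃ γ, ∑ k, ∑ k', (if k' < k then v (e k) (e k') else 0)
      = m ! • ∑ i, ∑ j, if i = j then 0 else v i j := by
  rw [two_nsmul]
  nth_rw 2 [sum_equiv_sum_sum_ite_lt_eq_gt]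
  rw [← sum_add_distrib]
  simp only [sum_sum_ite_lt_add_sum_sum_ite_gt, sum_sum_ite_eq_comp_equiv, sum_const, card_univ]
  rw [Fintype.card_equiv (Fintype.equivFinOfCardEq hγ).symm, Fintype.card_fin]

theorem two_nsmul_sum_equiv_subtype_sum_sum_ite_lt {ι : Type*} [Fintype ι] [DecidableEq ι]
    {p : ι → Prop} [DecidablePred p] {m : ℕ} (hp : Fintype.card {i // p i} = m)
    (v : ι → ι → M) :
    2 • ∑ e : Fin m ≃ {i // p i}, ∑ k, ∑ k', (if k' < k then v (e k) (e k') else 0)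
      = m ! • ∑ i, ∑ j, if p i ∧ p j then (if i = j then 0 else v i j) else 0 := by
  have hsub (F : ι → M) : ∑ i : {i // p i}, F i = ∑ i, if p i then F i else 0 := by
    rw [← sum_filter]
    exact (sum_subtype _ (by simp) F).symm
  rw [two_nsmul_sum_equiv_sum_sum_ite_lt hp fun i j : {i // p i} => v i j]
  simp only [Subtype.ext_iff, ite_and, sum_ite_irrel, sum_const_zero]
  rw [hsub fun i => ∑ j : {j // p j}, if i = j then 0 else v i j]
  refine congrArg _ (sum_congr rfl fun i _ => ?_)
  rw [hsub fun j => if i = j then 0 else v i j]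

end OrderedPairs

section Counting

variable {α : Type*} [Fintype α] [DecidableEq α]

theorem card_filter_powersetCard_subset_mul_descFactorial (A : Finset α) (n : ℕ) :
    #{S ∈ powersetCard n univ | A ⊆ S} * (Fintype.card α).descFactorial #A
      = (Fintype.card α).choose n * n.descFactorial #A := by
  by_cases hA : #A ≤ n
  · rw [card_filter_powersetCard_subset A univ n (subset_univ A) hA, card_univ,
      Nat.descFactorial_eq_factorial_mul_choose, Nat.descFactorial_eq_factorial_mul_choose,
      mul_left_comm (Nat.choose (Fintype.card α) n), Nat.choose_mul hA]
    ring
  · have hempty : {S ∈ powersetCard n (univ : Finset α) | A ⊆ S} = ∅ :=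
      filter_eq_empty_iff.2 fun S hS hAS =>
        hA ((card_le_card hAS).trans (mem_powersetCard.1 hS).2.le)
    rw [hempty, Nat.descFactorial_eq_zero_iff_lt.2 (not_le.1 hA), card_empty, zero_mul, mul_zero]

theorem card_filter_powersetCard_pair_subset_div_choose {n : ℕ} (hn : n ≤ Fintype.card α)
    (a a' : α) :
    (#{S ∈ powersetCard n univ | {a, a'} ⊆ S} : ℝ) / (Fintype.card α).choose n
      = if a = a' then (n : ℝ) / Fintype.card α
        else n * (n - 1) / (Fintype.card α * (Fintype.card α - 1)) := by
  have hchoose : ((Fintype.card α).choose n : ℝ) ≠ 0 := by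
    exact_mod_cast (Nat.choose_pos hn).ne'
  have hdesc : ((Fintype.card α).descFactorial #{a, a'} : ℝ) ≠ 0 := by
    exact_mod_cast (Nat.descFactorial_pos.2 (card_le_univ _)).ne'
  have key := congrArg (Nat.cast : ℕ → ℝ)
    (card_filter_powersetCard_subset_mul_descFactorial {a, a'} n)
  push_cast at key
  split_ifs with h
  · subst h
    simp only [pair_eq_singleton, card_singleton, Nat.descFactorial_one] at key hdesc ⊢
    rw [div_eq_div_iff hchoose hdesc]
    linear_combination key
  · simp only [card_pair h, Nat.cast_descFactorial_two] at key hdesc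
    rw [div_eq_div_iff hchoose hdesc]
    linear_combination key

end Counting

section Fibers

variable {ι κ : Type*} [Fintype ι] [DecidableEq κ]

theorem card_filter_mem_of_card_fiber {f : ι → κ} {b : ℕ} (hf : ∀ l, #{i | f i = l} = b)
    (S : Finset κ) : #{i | f i ∈ S} = #S * b := by
  rw [← sum_card_fiberwise_eq_card_filter, sum_const_nat fun l _ => hf l]

variable [Fintype κ] {V : Type*} [AddCommMonoid V]

theorem sum_sum_eq_sum_diag_add_sum_offDiag_fiberwise (f : ι → κ) (g : ι → ι → V) :
    ∑ i, ∑ j, g i j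
      = ∑ l, ∑ i ∈ {i | f i = l}, ∑ j ∈ {j | f j = l}, g i j
        + ∑ p ∈ univ.offDiag, ∑ i ∈ {i | f i = p.1}, ∑ j ∈ {j | f j = p.2}, g i j := by
  calc ∑ i, ∑ j, g i j
      = ∑ p ∈ univ ×ˢ univ, ∑ i ∈ {i | f i = p.1}, ∑ j ∈ {j | f j = p.2}, g i j := by
        rw [sum_product, ← sum_fiberwise univ f]
        refine sum_congr rfl fun l _ => ?_
        simp only [← sum_fiberwise univ f (g _), sum_comm (s := ({i | f i = l} : Finset ι))]
    _ = _ := by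
        rw [← diag_union_offDiag, sum_union (disjoint_diag_offDiag _), sum_diag]

theorem sum_sum_ite_smul_ite_eq [DecidableEq ι] {R : Type*} [Semiring R] [Module R V]
    (f : ι → κ) (a c : R) (g : ι → ι → V) :
    ∑ i, ∑ j, (if f i = f j then a else c) • (if i = j then 0 else g i j)
      = a • ∑ l, ∑ i ∈ {i | f i = l}, ∑ j ∈ {j | f j = l}, (if i = j then 0 else g i j)
        + c • ∑ p ∈ univ.offDiag, ∑ i ∈ {i | f i = p.1}, ∑ j ∈ {j | f j = p.2}, g i j := by
  rw [sum_sum_eq_sum_diag_add_sum_offDiag_fiberwise f]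
  simp only [smul_sum]
  congr 1
  · refine sum_congr rfl fun l _ => sum_congr rfl fun i hi => sum_congr rfl fun j hj => ?_
    simp only [mem_filter, mem_univ, true_and] at hi hj
    rw [if_pos (hi.trans hj.symm)]
  · refine sum_congr rfl fun p hp => sum_congr rfl fun i hi => sum_congr rfl fun j hj => ?_
    simp only [mem_filter, mem_univ, true_and, mem_offDiag] at hi hj hp
    have hij : f i ≠ f j := hi ▸ hj ▸ hp
    rw [if_neg hij, if_neg (ne_of_apply_ne f hij)]

end Fibers

namespace CorgiShuffle

def equivSigma (N n b : ℕ) (blk : Fin (N * b) → Fin N) :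
    CorgiShuffle N n b blk ≃
      Σ S : {S : Finset (Fin N) // #S = n}, Fin (n * b) ≃ {i // blk i ∈ S.1} where
  toFun ω := ⟨⟨ω.1.1, ω.2.1⟩, Equiv.ofBijective (fun k => ⟨ω.1.2 k, ω.2.2.2.1 k⟩)
    ⟨fun _ _ h => ω.2.2.1 (congrArg Subtype.val h), fun i =>
      (ω.2.2.2.2 i.1 i.2).imp fun _ hk => Subtype.ext hk⟩⟩
  invFun x := ⟨(x.1.1, fun k => x.2 k), x.1.2, fun _ _ h => x.2.injective (Subtype.ext h),
    fun k => (x.2 k).2, fun i hi => ⟨x.2.symm ⟨i, hi⟩, by simp⟩⟩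
  left_inv _ := rfl
  right_inv _ := Sigma.ext rfl (heq_of_eq (Equiv.ext fun _ => rfl))

variable {N n b : ℕ} {blk : Fin (N * b) → Fin N}

theorem card_subtype_blk_mem (hblk : ∀ l, #(blockSet blk l) = b) (S : Finset (Fin N)) :
    Fintype.card {i // blk i ∈ S} = #S * b := by
  rw [Fintype.card_subtype]
  exact card_filter_mem_of_card_fiber hblk S

theorem card_eq (hblk : ∀ l, #(blockSet blk l) = b) :
    Fintype.card (CorgiShuffle N n b blk) = N.choose n * (n * b)! := by
  have hS : ∀ S : {S : Finset (Fin N) // #S = n},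
      Fintype.card (Fin (n * b) ≃ {i // blk i ∈ S.1}) = (n * b)! := fun ⟨S, hSn⟩ => by
    have hcard : Fintype.card {i // blk i ∈ S} = n * b := hSn ▸ card_subtype_blk_mem hblk S
    rw [Fintype.card_equiv (Fintype.equivFinOfCardEq hcard).symm, Fintype.card_fin]
  rw [Fintype.card_congr (equivSigma N n b blk), Fintype.card_sigma,
    sum_congr rfl fun S _ => hS S, sum_const, card_univ, Fintype.card_finset_len,
    Fintype.card_fin, smul_eq_mul]

theorem two_nsmul_sum_sum_sum_ite_lt {V : Type*} [AddCommMonoid V]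
    (hblk : ∀ l, #(blockSet blk l) = b) (v : Fin (N * b) → Fin (N * b) → V) :
    2 • ∑ ω : CorgiShuffle N n b blk, ∑ k, ∑ k',
        (if k' < k then v (ω.val.2 k) (ω.val.2 k') else 0)
      = (n * b)! • ∑ i, ∑ j, #{S ∈ powersetCard n univ | {blk i, blk j} ⊆ S} •
          (if i = j then 0 else v i j) := by
  calc 2 • ∑ ω : CorgiShuffle N n b blk, ∑ k, ∑ k',
        (if k' < k then v (ω.val.2 k) (ω.val.2 k') else 0)
      = ∑ S : {S : Finset (Fin N) // #S = n}, 2 • ∑ e : Fin (n * b) ≃ {i // blk i ∈ S.1},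
          ∑ k, ∑ k', (if k' < k then v (e k) (e k') else 0) := by
        rw [← (equivSigma N n b blk).symm.sum_comp, Fintype.sum_sigma, smul_sum]
        rfl
    _ = (n * b)! • ∑ S ∈ powersetCard n univ, ∑ i, ∑ j,
          if blk i ∈ S ∧ blk j ∈ S then (if i = j then 0 else v i j) else 0 := by
        rw [sum_subtype _ (fun _ => mem_powersetCard_univ), smul_sum]
        exact sum_congr rfl fun ⟨S, hS⟩ _ =>
          two_nsmul_sum_equiv_subtype_sum_sum_ite_lt (hS ▸ card_subtype_blk_mem hblk S) v
    _ = _ := by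
        rw [sum_comm (s := powersetCard n univ)]
        refine congrArg _ (sum_congr rfl fun i _ => ?_)
        rw [sum_comm (s := powersetCard n univ)]
        refine sum_congr rfl fun j _ => ?_
        rw [← sum_filter, sum_const]
        simp only [insert_subset_iff, singleton_subset_iff]

end CorgiShuffle

theorem expectation_ordered_pair_double_sum_corgi_shuffle_general {d N n b : ℕ}
    (hnN : n ≤ N)
    (blk : Fin (N * b) → Fin N)
    (hblk : ∀ l, (blockSet blk l).card = b)
    (u : Fin (N * b) → Fin (N * b) → Eu d) :
    ((Fintype.card (CorgiShuffle N n b blk) : ℝ))⁻¹ •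
        ∑ ω : CorgiShuffle N n b blk,
          ∑ k : Fin (n * b), ∑ k' : Fin (n * b),
            (if k' < k then u (ω.val.2 k) (ω.val.2 k') else 0)
      = ((n : ℝ) / (2 * (N : ℝ))) •
          (∑ l, ∑ i ∈ blockSet blk l, ∑ j ∈ blockSet blk l,
            if i = j then 0 else u i j)
        + ((n : ℝ) * ((n : ℝ) - 1) / (2 * (N : ℝ) * ((N : ℝ) - 1))) •
            (∑ p ∈ Finset.univ.offDiag, ∑ i ∈ blockSet blk p.1, ∑ j ∈ blockSet blk p.2,
              u i j) := by
  have hweight (i j : Fin (N * b)) := card_filter_powersetCard_pair_subset_div_choose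
    ((Fintype.card_fin N).symm ▸ hnN) (blk i) (blk j)
  simp only [Fintype.card_fin] at hweight
  have hchoose : (N.choose n : ℝ) ≠ 0 := by exact_mod_cast (Nat.choose_pos hnN).ne'
  calc _ = ((2 : ℝ) * Fintype.card (CorgiShuffle N n b blk))⁻¹ •
          (2 • ∑ ω : CorgiShuffle N n b blk, ∑ k, ∑ k',
            (if k' < k then u (ω.val.2 k) (ω.val.2 k') else 0)) := by
        rw [← Nat.cast_smul_eq_nsmul ℝ, smul_smul, Nat.cast_ofNat, mul_inv, mul_right_comm,
          inv_mul_cancel₀ two_ne_zero, one_mul]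
    _ = (2 : ℝ)⁻¹ • ∑ i, ∑ j, ((#{S ∈ powersetCard n univ | {blk i, blk j} ⊆ S} : ℝ) /
          N.choose n) • (if i = j then 0 else u i j) := by
        rw [CorgiShuffle.two_nsmul_sum_sum_sum_ite_lt hblk, CorgiShuffle.card_eq hblk]
        simp only [← Nat.cast_smul_eq_nsmul ℝ, smul_sum, smul_smul]
        congr! 3 with i _ j _
        push_cast
        field_simp
    _ = _ := by
        simp only [hweight, sum_sum_ite_smul_ite_eq blk, smul_add, smul_smul]
        congr 2 <;> simp only [div_eq_mul_inv, mul_inv] <;> ring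

/-- **Expectation of the ordered-pair double sum over a CorgiPile shuffle
(the key identity used to bound I₁₁).** For any family `u_{i,j}` of vectors indexed by
ordered pairs (only values at pairs of distinct indices matter),
`E_ψ[∑_{k=1}^{nb} ∑_{k'<k} u_{ψ(k),ψ(k')}]
  = (n/(2N))·∑_l ∑_{i≠j∈B_l} u_{i,j}
    + (n(n−1)/(2N(N−1)))·∑_{l≠l'} ∑_{i∈B_l, j∈B_{l'}} u_{i,j}`. -/
theorem expectation_ordered_pair_double_sum_corgi_shuffle {d N n b : ℕ}
    (hN : 2 ≤ N) (hn1 : 1 ≤ n) (hnN : n ≤ N)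
    (blk : Fin (N * b) → Fin N)
    (hblk : ∀ l, (blockSet blk l).card = b)
    (u : Fin (N * b) → Fin (N * b) → Eu d) :
    ((Fintype.card (CorgiShuffle N n b blk) : ℝ))⁻¹ •
        ∑ ω : CorgiShuffle N n b blk,
          ∑ k : Fin (n * b), ∑ k' : Fin (n * b),
            (if k' < k then u (ω.val.2 k) (ω.val.2 k') else 0)
      = ((n : ℝ) / (2 * (N : ℝ))) •
          (∑ l, ∑ i ∈ blockSet blk l, ∑ j ∈ blockSet blk l,
            if i = j then 0 else u i j)
        + ((n : ℝ) * ((n : ℝ) - 1) / (2 * (N : ℝ) * ((N : ℝ) - 1))) •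
            (∑ p ∈ Finset.univ.offDiag, ∑ i ∈ blockSet blk p.1, ∑ j ∈ blockSet blk p.2,
              u i j) :=
  expectation_ordered_pair_double_sum_corgi_shuffle_general hnN blk hblk u

end
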